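/- arXiv:2005.12366 — 4 statements merged into one kernel-verified Lean document; each statement's English description precedes it below -/
import Mathlib

section
/- Let Φ : ℝ → ℝ be odd, twice continuously differentiable on ℝ \ {0}, with Φ'(x) > 0 for x ≠ 0, lim_{x→0} |Φ'(x)| = ∞, and lim_{x→0} |2Φ'(x)^3 / Φ''(x)| = 1. Then lim_{x→0⁺} 2Φ(x)Φ'(x) = 1. -/
open Filter Set

/-- Definition 2: Differentiator Generating Function. -/
structure IsDGF (Φ : ℝ → ℝ) : Prop where
  continuous : Continuous Φ
  odd : ∀ x, Φ (-x) = -Φ x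
  diff : ∀ x ≠ 0, DifferentiableAt ℝ Φ x
  diff' : ∀ x ≠ 0, DifferentiableAt ℝ (deriv Φ) x
  cont' : ContinuousOn (deriv Φ) {(0:ℝ)}ᶜ
  cont'' : ContinuousOn (deriv (deriv Φ)) {(0:ℝ)}ᶜ
  pos : ∀ x ≠ 0, 0 < deriv Φ x
  blowup : Tendsto (fun x => |deriv Φ x|) (nhdsWithin 0 {(0:ℝ)}ᶜ) atTop
  ratio : Tendsto (fun x => |2 * (deriv Φ x)^3 / deriv (deriv Φ) x|)
      (nhdsWithin 0 {(0:ℝ)}ᶜ) (nhds 1)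

/-!
Apply L'Hôpital's rule to `2Φ / (Φ')⁻¹`, of type `0/0` at `0⁺`; the quotient of derivatives is
`2Φ' / (-Φ''/Φ'²) = -2Φ'³/Φ''`, whose absolute value tends to `1`. It remains to see that
`Φ'' < 0` near `0⁺`: `Φ''` does not vanish near `0`, so it has constant sign on some `(0, b)`,
and it cannot be positive there, since then `Φ'` would be increasing on `(0, b)`, hence bounded
above near `0⁺`, whereas it blows up.
-/

open Topology

lemma eventually_pos_or_eventually_neg_nhdsGT {f : ℝ → ℝ} {a : ℝ}
    (hcont : ∀ᶠ x in 𝓝[>] a, ContinuousAt f x) (hne : ∀ᶠ x in 𝓝[>] a, f x ≠ 0) :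
    (∀ᶠ x in 𝓝[>] a, 0 < f x) ∨ ∀ᶠ x in 𝓝[>] a, f x < 0 := by
  obtain ⟨b, hab, hsub⟩ := mem_nhdsGT_iff_exists_Ioo_subset.1 (hcont.and hne)
  have hIoo : Ioo a b ∈ 𝓝[>] a := Ioo_mem_nhdsGT hab
  by_cases hpos : ∀ x ∈ Ioo a b, 0 < f x
  · exact .inl (eventually_of_mem hIoo hpos)
  push Not at hpos
  obtain ⟨x, hx, hfx⟩ := hpos
  refine .inr (eventually_of_mem hIoo fun y hy => ?_)
  by_contra! hfy
  have hcontOn : ContinuousOn f (Ioo a b) := fun z hz => (hsub hz).1.continuousWithinAt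
  obtain ⟨c, hc, hfc⟩ := isPreconnected_Ioo.intermediate_value hx hy hcontOn ⟨hfx, hfy⟩
  exact (hsub hc).2 hfc

lemma not_tendsto_atTop_of_monotoneOn_Ioo {g : ℝ → ℝ} {a b : ℝ} (hab : a < b)
    (hg : MonotoneOn g (Ioo a b)) : ¬Tendsto g (𝓝[>] a) atTop := by
  intro h
  have hc : (a + b) / 2 ∈ Ioo a b := ⟨by linarith, by linarith⟩
  obtain ⟨x, hgx, hx⟩ :=
    ((h.eventually_gt_atTop (g ((a + b) / 2))).and (Ioo_mem_nhdsGT hc.1)).exists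
  have : g x ≤ g ((a + b) / 2) := hg ⟨hx.1, hx.2.trans hc.2⟩ hc hx.2.le
  linarith

namespace IsDGF

variable {Φ : ℝ → ℝ}

lemma tendsto_deriv_nhdsGT_atTop (hΦ : IsDGF Φ) :
    Tendsto (deriv Φ) (𝓝[>] 0) atTop := by
  refine (hΦ.blowup.mono_left (nhdsGT_le_nhdsNE 0)).congr' ?_
  filter_upwards [self_mem_nhdsWithin] with x (hx : 0 < x)
  exact abs_of_pos (hΦ.pos x hx.ne')

lemma eventually_deriv_deriv_ne_zero (hΦ : IsDGF Φ) :
    ∀ᶠ x in 𝓝[≠] 0, deriv (deriv Φ) x ≠ 0 := by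
  filter_upwards [hΦ.ratio.eventually_ne one_ne_zero] with x hx h0
  simp [h0] at hx

lemma eventually_deriv_deriv_neg (hΦ : IsDGF Φ) :
    ∀ᶠ x in 𝓝[>] 0, deriv (deriv Φ) x < 0 := by
  have hcont : ∀ᶠ x in 𝓝[>] (0 : ℝ), ContinuousAt (deriv (deriv Φ)) x := by
    filter_upwards [self_mem_nhdsWithin] with x (hx : 0 < x)
    exact hΦ.cont''.continuousAt (isOpen_compl_singleton.mem_nhds hx.ne')
  refine (eventually_pos_or_eventually_neg_nhdsGT hcont
    (nhdsGT_le_nhdsNE 0 hΦ.eventually_deriv_deriv_ne_zero)).resolve_left fun hpos => ?_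
  obtain ⟨b, hb, hsub⟩ := mem_nhdsGT_iff_exists_Ioo_subset.1 hpos
  have hmono : StrictMonoOn (deriv Φ) (Ioo 0 b) :=
    strictMonoOn_of_deriv_pos (convex_Ioo 0 b)
      (hΦ.cont'.mono fun x hx => hx.1.ne')
      (by rw [interior_Ioo]; exact hsub)
  exact not_tendsto_atTop_of_monotoneOn_Ioo hb hmono.monotoneOn hΦ.tendsto_deriv_nhdsGT_atTop

end IsDGF

theorem stmt_6 (Φ : ℝ → ℝ) (hΦ : IsDGF Φ) :
    Tendsto (fun x => 2 * Φ x * deriv Φ x) (nhdsWithin 0 (Set.Ioi 0)) (nhds 1) := by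
  have hnum : Tendsto (fun x => 2 * Φ x) (𝓝[>] 0) (𝓝 0) := by
    simpa [Function.Odd.map_zero hΦ.odd] using
      ((hΦ.continuous.tendsto 0).const_mul 2).mono_left nhdsWithin_le_nhds
  have hden : Tendsto (fun x => (deriv Φ x)⁻¹) (𝓝[>] 0) (𝓝 0) :=
    hΦ.tendsto_deriv_nhdsGT_atTop.inv_tendsto_atTop
  have hsign := hΦ.eventually_deriv_deriv_neg
  have hx₀ : ∀ᶠ x in 𝓝[>] (0 : ℝ), 0 < x := self_mem_nhdsWithin
  have hlim := HasDerivAt.lhopital_zero_nhdsGT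
    (f' := fun x => 2 * deriv Φ x) (g' := fun x => -deriv (deriv Φ) x / deriv Φ x ^ 2)
    (by filter_upwards [hx₀] with x hx using (hΦ.diff x hx.ne').hasDerivAt.const_mul 2)
    (by filter_upwards [hx₀] with x hx
        using (hΦ.diff' x hx.ne').hasDerivAt.inv (hΦ.pos x hx.ne').ne')
    (by filter_upwards [hx₀, hsign] with x hx hneg
        exact div_ne_zero (neg_ne_zero.2 hneg.ne) (pow_ne_zero 2 (hΦ.pos x hx.ne').ne'))
    hnum hden
    ((hΦ.ratio.mono_left (nhdsGT_le_nhdsNE 0)).congr' <| by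
      filter_upwards [hx₀, hsign] with x hx hneg
      have hd := hΦ.pos x hx.ne'
      rw [abs_of_neg (div_neg_of_pos_of_neg (by positivity) hneg)]
      field_simp)
  simpa only [div_inv_eq_mul] using hlim
end

section
/- Let Φ be a DGF and k₃ > 0, and let ν₁(x) = k₃⁻¹ Φ(k₃² x). Then for every x ≠ 0, lim_{α→0} ν₁(α² x)² / α² = |x|. -/
open Filter Set

/-!
Write `g = 1 / Φ'²`. The ratio condition says exactly that `|g'| = 4 / |2 Φ'³ / Φ''| → 4` at `0`,
and the blow-up of `Φ'` says `g → 0`. By Darboux, `g'` has constant sign near `0⁺`, and it must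
be positive since `g > 0`; so `g' → 4` and L'Hôpital gives `g(y) / y → 4`, i.e.
`2 √y Φ'(y) → 1`. A second application of L'Hôpital, to `Φ(y) / √y`, gives `Φ(y)² / y → 1`
as `y → 0⁺`, and oddness extends this to `Φ(y)² / |y| → 1` as `y → 0`. The theorem is this
limit along `y = k₃² α² x`.
-/

open Topology

theorem tendsto_deriv_nhdsGT_of_tendsto_abs_deriv {f f' : ℝ → ℝ} {a L : ℝ} (hL : 0 < L)
    (hf : ∀ᶠ x in 𝓝[>] a, HasDerivAt f (f' x) x) (hf_pos : ∀ᶠ x in 𝓝[>] a, 0 < f x)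
    (hf_lim : Tendsto f (𝓝[>] a) (𝓝 0)) (hf' : Tendsto (fun x => |f' x|) (𝓝[>] a) (𝓝 L)) :
    Tendsto f' (𝓝[>] a) (𝓝 L) := by
  have hf'_ne : ∀ᶠ x in 𝓝[>] a, f' x ≠ 0 :=
    (hf'.eventually (eventually_gt_nhds hL)).mono fun x hx => abs_pos.1 hx
  obtain ⟨b, hab : a < b, hb⟩ := mem_nhdsGT_iff_exists_Ioo_subset.1 (hf.and (hf_pos.and hf'_ne))
  have hderiv : ∀ x ∈ Ioo a b, HasDerivWithinAt f (f' x) (Ioo a b) x :=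
    fun x hx => (hb hx).1.hasDerivWithinAt
  rcases hasDerivWithinAt_forall_lt_or_forall_gt_of_forall_ne (convex_Ioo a b) hderiv
    (fun x hx => (hb hx).2.2) with hneg | hpos
  · exfalso
    have hanti : AntitoneOn f (Ioo a b) :=
      antitoneOn_of_hasDerivWithinAt_nonpos (convex_Ioo a b)
        (fun x hx => (hb hx).1.continuousAt.continuousWithinAt)
        (by simpa only [interior_Ioo] using hderiv)
        (by simpa only [interior_Ioo] using fun x hx => (hneg x hx).le)
    obtain ⟨c, hc⟩ := nonempty_Ioo.2 hab
    have hfc : f c ≤ 0 := ge_of_tendsto hf_lim <| by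
      filter_upwards [Ioo_mem_nhdsGT hc.1] with x hx
      exact hanti ⟨hx.1, hx.2.trans hc.2⟩ hc hx.2.le
    exact (hb hc).2.1.not_ge hfc
  · refine hf'.congr' ?_
    filter_upwards [Ioo_mem_nhdsGT hab] with x hx
    exact abs_of_pos (hpos x hx)

namespace IsDGF

variable {Φ : ℝ → ℝ} (hΦ : IsDGF Φ)
include hΦ

theorem map_zero : Φ 0 = 0 := by
  have h := hΦ.odd 0
  rw [neg_zero] at h
  linarith

theorem sq_map_abs (y : ℝ) : Φ |y| ^ 2 = Φ y ^ 2 := by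
  rcases abs_choice y with h | h <;> simp [h, hΦ.odd]

theorem tendsto_nhdsGT_zero : Tendsto Φ (𝓝[>] 0) (𝓝 0) := by
  simpa [hΦ.map_zero] using (hΦ.continuous.tendsto 0).mono_left nhdsWithin_le_nhds

theorem tendsto_inv_deriv_sq : Tendsto (fun y => (deriv Φ y ^ 2)⁻¹) (𝓝[≠] 0) (𝓝 0) := by
  refine Tendsto.inv_tendsto_atTop ?_
  simpa only [← abs_mul, ← sq, sq_abs] using hΦ.blowup.atTop_mul_atTop₀ hΦ.blowup

theorem hasDerivAt_inv_deriv_sq {y : ℝ} (hy : y ≠ 0) :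
    HasDerivAt (fun y => (deriv Φ y ^ 2)⁻¹)
      (-4 / (2 * deriv Φ y ^ 3 / deriv (deriv Φ) y)) y := by
  have hD : deriv Φ y ≠ 0 := (hΦ.pos y hy).ne'
  refine (((hΦ.diff' y hy).hasDerivAt.fun_pow 2).fun_inv (pow_ne_zero 2 hD)).congr_deriv ?_
  field_simp
  ring

theorem tendsto_abs_deriv_inv_deriv_sq :
    Tendsto (fun y => |-4 / (2 * deriv Φ y ^ 3 / deriv (deriv Φ) y)|) (𝓝[≠] 0) (𝓝 4) := by
  simpa only [abs_div, abs_neg, Pi.div_def, div_one, abs_of_pos (four_pos : (0 : ℝ) < 4)] using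
    (tendsto_const_nhds (x := (4 : ℝ))).div hΦ.ratio one_ne_zero

theorem tendsto_inv_deriv_sq_div :
    Tendsto (fun y => (deriv Φ y ^ 2)⁻¹ / y) (𝓝[>] 0) (𝓝 4) := by
  have hderiv : ∀ᶠ y in 𝓝[>] 0, HasDerivAt (fun y => (deriv Φ y ^ 2)⁻¹)
      (-4 / (2 * deriv Φ y ^ 3 / deriv (deriv Φ) y)) y :=
    eventually_nhdsWithin_of_forall fun y hy => hΦ.hasDerivAt_inv_deriv_sq (ne_of_gt hy)
  have hGT : 𝓝[>] (0 : ℝ) ≤ 𝓝[≠] 0 := nhdsWithin_mono _ fun y hy => ne_of_gt hy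
  have hg' := tendsto_deriv_nhdsGT_of_tendsto_abs_deriv four_pos hderiv
    (eventually_nhdsWithin_of_forall fun y hy =>
      inv_pos.2 (pow_pos (hΦ.pos y (ne_of_gt hy)) 2))
    (hΦ.tendsto_inv_deriv_sq.mono_left hGT) (hΦ.tendsto_abs_deriv_inv_deriv_sq.mono_left hGT)
  exact HasDerivAt.lhopital_zero_nhdsGT hderiv
    (Eventually.of_forall fun y => hasDerivAt_id y) (Eventually.of_forall fun _ => one_ne_zero)
    (hΦ.tendsto_inv_deriv_sq.mono_left hGT) (tendsto_id.mono_left nhdsWithin_le_nhds)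
    (by simpa only [div_one] using hg')

theorem tendsto_two_mul_sqrt_mul_deriv :
    Tendsto (fun y => 2 * √y * deriv Φ y) (𝓝[>] 0) (𝓝 1) := by
  have h := ((hΦ.tendsto_inv_deriv_sq_div.inv₀ four_ne_zero).sqrt).const_mul 2
  have h4 : 2 * √(4 : ℝ)⁻¹ = 1 := by
    rw [Real.sqrt_inv, show (4 : ℝ) = 2 ^ 2 by norm_num, Real.sqrt_sq zero_le_two]
    norm_num
  rw [h4] at h
  refine h.congr' ?_
  filter_upwards [self_mem_nhdsWithin] with y (hy : 0 < y)
  rw [inv_div, div_inv_eq_mul, Real.sqrt_mul hy.le, Real.sqrt_sq (hΦ.pos y hy.ne').le, mul_assoc]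

theorem tendsto_div_sqrt : Tendsto (fun y => Φ y / √y) (𝓝[>] 0) (𝓝 1) := by
  have hsqrt : Tendsto (fun y => √y) (𝓝[>] 0) (𝓝 0) := by
    simpa using (Real.continuous_sqrt.tendsto 0).mono_left nhdsWithin_le_nhds
  refine HasDerivAt.lhopital_zero_nhdsGT
    (eventually_nhdsWithin_of_forall fun y hy => (hΦ.diff y (ne_of_gt hy)).hasDerivAt)
    (eventually_nhdsWithin_of_forall fun y hy => Real.hasDerivAt_sqrt (ne_of_gt hy))
    (eventually_nhdsWithin_of_forall fun y hy => by
      have : 0 < √y := Real.sqrt_pos.2 hy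
      positivity)
    hΦ.tendsto_nhdsGT_zero hsqrt ?_
  refine hΦ.tendsto_two_mul_sqrt_mul_deriv.congr fun y => ?_
  rw [div_div_eq_mul_div, div_one, mul_comm]

theorem tendsto_sq_div : Tendsto (fun y => Φ y ^ 2 / y) (𝓝[>] 0) (𝓝 1) := by
  refine ((one_pow (M := ℝ) 2) ▸ hΦ.tendsto_div_sqrt.pow 2).congr' ?_
  filter_upwards [self_mem_nhdsWithin] with y (hy : 0 < y)
  rw [div_pow, Real.sq_sqrt hy.le]

theorem tendsto_sq_div_abs : Tendsto (fun y => Φ y ^ 2 / |y|) (𝓝[≠] 0) (𝓝 1) :=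
  (hΦ.tendsto_sq_div.comp tendsto_abs_nhdsNE_zero).congr fun y => by
    simp only [Function.comp_apply, hΦ.sq_map_abs]

end IsDGF

theorem stmt_7 (Φ : ℝ → ℝ) (hΦ : IsDGF Φ) (k₃ : ℝ) (hk₃ : 0 < k₃)
    (ν₁ : ℝ → ℝ) (hν₁ : ν₁ = fun x => k₃⁻¹ * Φ (k₃^2 * x)) (x : ℝ) (hx : x ≠ 0) :
    Tendsto (fun α : ℝ => (ν₁ (α^2 * x))^2 / α^2) (nhdsWithin 0 {(0:ℝ)}ᶜ) (nhds |x|) := by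
  subst hν₁
  have hscale : Tendsto (fun α : ℝ => k₃ ^ 2 * (α ^ 2 * x)) (𝓝[≠] 0) (𝓝[≠] 0) := by
    refine tendsto_nhdsWithin_iff.2 ⟨?_, ?_⟩
    · have hcont : Continuous fun α : ℝ => k₃ ^ 2 * (α ^ 2 * x) := by fun_prop
      simpa using (hcont.tendsto 0).mono_left nhdsWithin_le_nhds
    · filter_upwards [self_mem_nhdsWithin] with α (hα : α ≠ 0)
      exact mul_ne_zero (pow_ne_zero 2 hk₃.ne') (mul_ne_zero (pow_ne_zero 2 hα) hx)
  refine (one_mul |x| ▸ (hΦ.tendsto_sq_div_abs.comp hscale).mul_const |x|).congr' ?_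
  filter_upwards [self_mem_nhdsWithin] with α (hα : α ≠ 0)
  have hx' : |x| ≠ 0 := abs_ne_zero.2 hx
  simp only [Function.comp_apply, abs_mul, abs_pow, sq_abs]
  field_simp
end

section
/- Let Φ be an admissible DGF, k₃ > 0, (a,b) ⊆ ℝ a possibly unbounded interval, and h : (a,b) → ℝ continuously differentiable with h'(τ) ≥ α h(τ) > 0 for all τ ∈ (a,b) and some α ∈ ℝ. Then ∫_a^b Ψ'(h(τ)) dτ ≤ (1/(k₃α)) ∫_{Φ⁻¹(k₃ h(a))}^{Φ⁻¹(k₃ h(b))} 1/Φ(x) dx, where Ψ = Φ_{k₃}⁻¹. -/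
/-!
With x(τ) = Φ⁻¹(k₃ h(τ)) = k₃² Ψ(h(τ)) one has Ψ'(h) = 1/(k₃ Φ'(x)) and
x' / (k₃ α Φ(x)) = Ψ'(h) · h' / (α h) ≥ Ψ'(h), so the claim is the change of variables
τ ↦ x(τ) applied to 1/(k₃ α Φ). The one-dimensional change of variables for injective maps needs
no integrability of the left-hand side; for the right-hand side, the growth bound
|Φ''| ≤ 2D|Φ'|³ makes 1/Φ'² a 4D-Lipschitz function vanishing at 0, whence Φ(x) ≥ √(x/D) and
1/Φ is locally integrable.
-/

open Filter Set

/-- Definition 3: admissible DGF with constants B, C, D. -/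
structure IsAdmissibleDGF (Φ : ℝ → ℝ) (B C D : ℝ) extends IsDGF Φ : Prop where
  strictMono : StrictMono Φ
  bijective : Function.Bijective Φ
  B_pos : 0 < B
  C_pos : 0 < C
  D_ge_one : 1 ≤ D
  integral : (∫ x in Set.Ioi (0:ℝ), 1 / (B * Φ x)) ≤ 1
  deriv_lb : ∀ x ≠ 0, 1 ≤ C * deriv Φ x
  growth : ∀ x ≠ 0, |deriv (deriv Φ) x| ≤ 2 * D * |deriv Φ x|^3

open MeasureTheory Topology

theorem le_mul_of_tendsto_zero_of_abs_deriv_le {G G' : ℝ → ℝ} {K x : ℝ}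
    (hG : ∀ y ∈ Ioi (0 : ℝ), HasDerivAt G (G' y) y) (hG' : ∀ y ∈ Ioi (0 : ℝ), |G' y| ≤ K)
    (hlim : Tendsto G (𝓝[>] 0) (𝓝 0)) (hx : 0 < x) : G x ≤ K * x := by
  have hK : 0 ≤ K := (abs_nonneg _).trans (hG' x hx)
  have hlip : ∀ y ∈ Ioo 0 x, G x ≤ G y + K * x := by
    intro y hy
    have := (convex_Ioi (0 : ℝ)).norm_image_sub_le_of_norm_hasDerivWithin_le
      (fun z hz => (hG z hz).hasDerivWithinAt) hG' hy.1 hx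
    rw [Real.norm_eq_abs, Real.norm_eq_abs, abs_of_pos (sub_pos.2 hy.2)] at this
    nlinarith [le_abs_self (G x - G y), hy.1]
  have := ge_of_tendsto (hlim.add_const (K * x)) <|
    (eventually_nhdsWithin_of_forall hlip).filter_mono (nhdsWithin_le_of_mem (Ioo_mem_nhdsGT hx))
  linarith

theorem MonotoneOn.mapsTo_Icc_of_tendsto {α β : Type*} [LinearOrder α] [TopologicalSpace α]
    [OrderTopology α] [DenselyOrdered α] [Preorder β] [TopologicalSpace β]
    [OrderClosedTopology β] {f : α → β} {a b : α} {la lb : β} (hf : MonotoneOn f (Ioo a b))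
    (ha : Tendsto f (𝓝[>] a) (𝓝 la)) (hb : Tendsto f (𝓝[<] b) (𝓝 lb)) :
    MapsTo f (Ioo a b) (Icc la lb) := by
  intro τ hτ
  have : (𝓝[>] a).NeBot := nhdsGT_neBot_of_exists_gt ⟨τ, hτ.1⟩
  have : (𝓝[<] b).NeBot := nhdsLT_neBot_of_exists_lt ⟨τ, hτ.2⟩
  constructor
  · apply le_of_tendsto ha
    filter_upwards [Ioo_mem_nhdsGT hτ.1] with s hs
    exact hf ⟨hs.1, hs.2.trans hτ.2⟩ hτ hs.2.le
  · apply ge_of_tendsto hb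
    filter_upwards [Ioo_mem_nhdsLT hτ.2] with s hs
    exact hf hτ ⟨hτ.1.trans hs.1, hs.2⟩ hs.1.le

theorem Function.invFun_mul_comp_mul {f : ℝ → ℝ} (hf : Function.Bijective f) {c d : ℝ}
    (hc : c ≠ 0) (hd : d ≠ 0) :
    Function.invFun (fun x => c * f (d * x)) = fun y => d⁻¹ * Function.invFun f (c⁻¹ * y) := by
  refine Function.invFun_eq_of_injective_of_rightInverse ?_ fun y => ?_
  · intro x₁ x₂ hx
    exact mul_left_cancel₀ hd (hf.injective (mul_left_cancel₀ hc hx))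
  · simp only [mul_inv_cancel_left₀ hd, Function.rightInverse_invFun hf.surjective _,
      mul_inv_cancel_left₀ hc]

theorem setIntegral_le_intervalIntegral_of_le_abs_deriv_mul_comp {s : Set ℝ}
    {f f' g u : ℝ → ℝ} {x y : ℝ} (hs : MeasurableSet s)
    (hf' : ∀ t ∈ s, HasDerivWithinAt f (f' t) s t) (hf : InjOn f s) (hfs : MapsTo f s (Icc x y))
    (hxy : x ≤ y) (hg : IntervalIntegrable g volume x y) (hg0 : ∀ z ∈ Icc x y, 0 ≤ g z)
    (hu0 : ∀ t ∈ s, 0 ≤ u t) (hu : ∀ t ∈ s, u t ≤ |f' t| * g (f t)) :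
    ∫ t in s, u t ≤ ∫ z in x..y, g z := by
  have hgI : IntegrableOn g (Icc x y) := (intervalIntegrable_iff_integrableOn_Icc_of_le hxy).mp hg
  have hint : IntegrableOn (fun t => |f' t| • g (f t)) s :=
    (integrableOn_image_iff_integrableOn_abs_deriv_smul hs hf' hf g).mp
      (hgI.mono_set hfs.image_subset)
  calc ∫ t in s, u t ≤ ∫ t in s, |f' t| • g (f t) :=
        integral_mono_of_nonneg (ae_restrict_of_forall_mem hs hu0) hint
          (ae_restrict_of_forall_mem hs hu)
    _ = ∫ z in f '' s, g z := (integral_image_eq_integral_abs_deriv_smul hs hf' hf g).symm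
    _ ≤ ∫ z in Icc x y, g z :=
        setIntegral_mono_set hgI (ae_restrict_of_forall_mem measurableSet_Icc hg0)
          (Eventually.of_forall hfs.image_subset)
    _ = ∫ z in x..y, g z := by
        rw [intervalIntegral.integral_of_le hxy, integral_Icc_eq_integral_Ioc]

theorem IsDGF.map_zero_s11 {Φ : ℝ → ℝ} (hΦ : IsDGF Φ) : Φ 0 = 0 := by
  have := hΦ.odd 0
  rw [neg_zero] at this
  linarith

namespace IsAdmissibleDGF

variable {Φ : ℝ → ℝ} {B C D : ℝ}

theorem inv_sq_deriv_le (hΦ : IsAdmissibleDGF Φ B C D) {x : ℝ} (hx : 0 < x) :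
    (deriv Φ x ^ 2)⁻¹ ≤ 4 * D * x := by
  refine le_mul_of_tendsto_zero_of_abs_deriv_le (G := fun y => (deriv Φ y ^ 2)⁻¹)
    (G' := fun y => -(2 * deriv Φ y * deriv (deriv Φ) y) / (deriv Φ y ^ 2) ^ 2) ?_ ?_ ?_ hx
  · intro y hy
    exact ((hΦ.diff' y hy.ne').hasDerivAt.fun_pow 2).inv (pow_pos (hΦ.pos y hy.ne') 2).ne'
      |>.congr_deriv (by norm_num)
  · intro y hy
    have hp := hΦ.pos y hy.ne'
    have hg := hΦ.growth y hy.ne'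
    rw [abs_of_pos hp] at hg
    rw [abs_div, abs_neg, abs_of_pos (by positivity : 0 < (deriv Φ y ^ 2) ^ 2), abs_mul, abs_mul,
      abs_of_pos hp, abs_two, div_le_iff₀ (by positivity)]
    nlinarith [pow_pos hp 3]
  · have hb := hΦ.blowup.mono_left (nhdsWithin_mono _ fun y (hy : y ∈ Ioi 0) => ne_of_gt hy)
    simpa [Function.comp_def, Pi.inv_def, sq_abs] using
      ((tendsto_pow_atTop two_ne_zero).comp hb).inv_tendsto_atTop

theorem sqrt_le_sqrt_mul (hΦ : IsAdmissibleDGF Φ B C D) {x : ℝ} (hx : 0 ≤ x) :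
    √x ≤ √D * Φ x := by
  have hderiv : ∀ t ∈ Ioi (0 : ℝ),
      HasDerivAt (fun t => √D * Φ t - √t) (√D * deriv Φ t - 1 / (2 * √t)) t := fun t ht =>
    ((hΦ.diff t (ne_of_gt ht)).hasDerivAt.const_mul _).sub (Real.hasDerivAt_sqrt (ne_of_gt ht))
  have hmono : MonotoneOn (fun t => √D * Φ t - √t) (Ici 0) := by
    refine monotoneOn_of_deriv_nonneg (convex_Ici 0)
      ((continuous_const.mul hΦ.continuous).sub Real.continuous_sqrt).continuousOn
      (fun t ht => ?_) (fun t ht => ?_) <;> rw [interior_Ici] at ht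
    · exact (hderiv t ht).differentiableAt.differentiableWithinAt
    · have hp := hΦ.pos t (ne_of_gt ht)
      have hle := hΦ.inv_sq_deriv_le ht
      rw [inv_le_iff_one_le_mul₀ (by positivity)] at hle
      have hsq : (√D * deriv Φ t * (2 * √t)) ^ 2 = 4 * D * t * deriv Φ t ^ 2 := by
        rw [mul_pow, mul_pow, mul_pow, Real.sq_sqrt ht.le,
          Real.sq_sqrt (zero_le_one.trans hΦ.D_ge_one)]
        ring
      have hst := Real.sqrt_pos.2 ht
      rw [(hderiv t ht).deriv, sub_nonneg, div_le_iff₀ (by positivity)]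
      exact le_of_sq_le_sq (by rw [hsq]; simpa using hle) (by positivity)
  simpa [hΦ.map_zero_s11] using hmono self_mem_Ici hx hx

theorem map_pos (hΦ : IsAdmissibleDGF Φ B C D) {x : ℝ} (hx : 0 < x) : 0 < Φ x :=
  hΦ.map_zero_s11 ▸ hΦ.strictMono hx

theorem one_div_le_sqrt_mul_rpow (hΦ : IsAdmissibleDGF Φ B C D) {x : ℝ} (hx : 0 < x) :
    1 / Φ x ≤ √D * x ^ (-(1 / 2) : ℝ) := by
  rw [Real.rpow_neg hx.le, ← Real.sqrt_eq_rpow, ← div_eq_mul_inv,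
    div_le_div_iff₀ (hΦ.map_pos hx) (Real.sqrt_pos.2 hx), one_mul]
  exact hΦ.sqrt_le_sqrt_mul hx.le

theorem intervalIntegrable_one_div_of_nonneg (hΦ : IsAdmissibleDGF Φ B C D) {M : ℝ}
    (hM : 0 ≤ M) : IntervalIntegrable (fun t => 1 / Φ t) volume 0 M := by
  refine ((intervalIntegral.intervalIntegrable_rpow' (a := 0) (b := M) (r := -(1 / 2))
    (by norm_num)).const_mul √D).mono_fun'
    (hΦ.continuous.measurable.const_div 1).aestronglyMeasurable ?_
  rw [uIoc_of_le hM]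
  filter_upwards [ae_restrict_mem measurableSet_Ioc] with t ht
  rw [Real.norm_of_nonneg (one_div_nonneg.2 (hΦ.map_pos ht.1).le)]
  exact hΦ.one_div_le_sqrt_mul_rpow ht.1

theorem intervalIntegrable_one_div (hΦ : IsAdmissibleDGF Φ B C D) (x y : ℝ) :
    IntervalIntegrable (fun t => 1 / Φ t) volume x y := by
  have h0 : ∀ M, IntervalIntegrable (fun t => 1 / Φ t) volume 0 M := by
    intro M
    rcases le_total 0 M with hM | hM
    · exact hΦ.intervalIntegrable_one_div_of_nonneg hM
    · rw [IntervalIntegrable.iff_comp_neg, neg_zero]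
      simpa [hΦ.odd, div_neg, Pi.neg_def] using
        (hΦ.intervalIntegrable_one_div_of_nonneg (neg_nonneg.2 hM)).neg
  exact (h0 x).symm.trans (h0 y)

theorem apply_invFun (hΦ : IsAdmissibleDGF Φ B C D) (y : ℝ) : Φ (Function.invFun Φ y) = y :=
  Function.rightInverse_invFun hΦ.bijective.surjective y

theorem strictMono_invFun (hΦ : IsAdmissibleDGF Φ B C D) : StrictMono (Function.invFun Φ) :=
  fun y₁ y₂ h => hΦ.strictMono.lt_iff_lt.mp (by rwa [hΦ.apply_invFun, hΦ.apply_invFun])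

theorem invFun_ne_zero (hΦ : IsAdmissibleDGF Φ B C D) {y : ℝ} (hy : y ≠ 0) :
    Function.invFun Φ y ≠ 0 :=
  fun h0 => hy (by rw [← hΦ.apply_invFun y, h0, hΦ.map_zero_s11])

theorem hasDerivAt_invFun (hΦ : IsAdmissibleDGF Φ B C D) {y : ℝ} (hy : y ≠ 0) :
    HasDerivAt (Function.invFun Φ) (deriv Φ (Function.invFun Φ y))⁻¹ y := by
  have hne := hΦ.invFun_ne_zero hy
  have hcont : Continuous (Function.invFun Φ) :=
    hΦ.strictMono_invFun.monotone.continuous_of_surjective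
      (Function.invFun_surjective hΦ.bijective.injective)
  exact HasDerivAt.of_local_left_inverse hcont.continuousAt (hΦ.diff _ hne).hasDerivAt
    (hΦ.pos _ hne).ne' (Eventually.of_forall hΦ.apply_invFun)

theorem hasDerivAt_invFun_rescale (hΦ : IsAdmissibleDGF Φ B C D) {k y : ℝ} (hk : k ≠ 0)
    (hy : y ≠ 0) :
    HasDerivAt (Function.invFun fun x => k⁻¹ * Φ (k ^ 2 * x))
      (k * deriv Φ (Function.invFun Φ (k * y)))⁻¹ y := by
  rw [Function.invFun_mul_comp_mul hΦ.bijective (inv_ne_zero hk) (pow_ne_zero 2 hk), inv_inv]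
  exact ((hΦ.hasDerivAt_invFun (mul_ne_zero hk hy)).comp y
    ((hasDerivAt_id' y).const_mul k)).const_mul (k ^ 2)⁻¹ |>.congr_deriv (by field_simp)

theorem one_div_mul_one_div_nonneg (hΦ : IsAdmissibleDGF Φ B C D) {k α u v z : ℝ} (hk : 0 < k)
    (hu : 0 ≤ α * u) (hv : 0 ≤ α * v)
    (hz : z ∈ Icc (Function.invFun Φ (k * u)) (Function.invFun Φ (k * v))) :
    0 ≤ 1 / (k * α) * (1 / Φ z) := by
  have hαz : 0 ≤ α * Φ z := by
    have h₁ := hΦ.strictMono.monotone hz.1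
    have h₂ := hΦ.strictMono.monotone hz.2
    rw [hΦ.apply_invFun] at h₁ h₂
    rcases le_total 0 α with hα | hα <;> nlinarith
  rw [one_div_mul_one_div, mul_assoc]
  exact one_div_nonneg.2 (mul_nonneg hk.le hαz)

theorem setIntegral_inv_mul_deriv_invFun_le (hΦ : IsAdmissibleDGF Φ B C D) {s : Set ℝ}
    {h h' : ℝ → ℝ} {k α u v : ℝ} (hs : MeasurableSet s) (hk : 0 < k)
    (hh : ∀ τ ∈ s, HasDerivAt h (h' τ) τ) (hinj : InjOn h s) (hmaps : MapsTo h s (Icc u v))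
    (huv : u ≤ v) (hα : ∀ τ ∈ s, α * h τ ≤ h' τ ∧ 0 < α * h τ) (hu : 0 ≤ α * u)
    (hv : 0 ≤ α * v) :
    ∫ τ in s, (k * deriv Φ (Function.invFun Φ (k * h τ)))⁻¹ ≤
      1 / (k * α) * ∫ x in Function.invFun Φ (k * u)..Function.invFun Φ (k * v), 1 / Φ x := by
  have hkh : ∀ τ ∈ s, k * h τ ≠ 0 := fun τ hτ =>
    mul_ne_zero hk.ne' (right_ne_zero_of_mul (hα τ hτ).2.ne')
  have hX : ∀ τ ∈ s, HasDerivAt (fun τ => Function.invFun Φ (k * h τ))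
      ((deriv Φ (Function.invFun Φ (k * h τ)))⁻¹ * (k * h' τ)) τ := fun τ hτ =>
    HasDerivAt.comp (h₂ := Function.invFun Φ) τ (hΦ.hasDerivAt_invFun (hkh τ hτ))
      ((hh τ hτ).const_mul k)
  set X : ℝ → ℝ := fun τ => Function.invFun Φ (k * h τ)
  have hXinj : InjOn X s := fun τ₁ h₁ τ₂ h₂ heq =>
    hinj h₁ h₂ (mul_left_cancel₀ hk.ne' (hΦ.strictMono_invFun.injective heq))
  have hXmaps : MapsTo X s (Icc (Function.invFun Φ (k * u)) (Function.invFun Φ (k * v))) :=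
    fun τ hτ => ⟨hΦ.strictMono_invFun.monotone (mul_le_mul_of_nonneg_left (hmaps hτ).1 hk.le),
      hΦ.strictMono_invFun.monotone (mul_le_mul_of_nonneg_left (hmaps hτ).2 hk.le)⟩
  rw [← intervalIntegral.integral_const_mul]
  refine setIntegral_le_intervalIntegral_of_le_abs_deriv_mul_comp hs
    (fun τ hτ => (hX τ hτ).hasDerivWithinAt) hXinj hXmaps
    (hΦ.strictMono_invFun.monotone (mul_le_mul_of_nonneg_left huv hk.le))
    ((hΦ.intervalIntegrable_one_div _ _).const_mul _)
    (fun z hz => hΦ.one_div_mul_one_div_nonneg hk hu hv hz) (fun τ hτ => ?_) (fun τ hτ => ?_)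
  all_goals have hp : 0 < deriv Φ (X τ) := hΦ.pos _ (hΦ.invFun_ne_zero (hkh τ hτ))
  · positivity
  · obtain ⟨hle, hpos⟩ := hα τ hτ
    have hΦX : Φ (X τ) = k * h τ := hΦ.apply_invFun _
    have hh'pos := hpos.trans_le hle
    rw [hΦX, abs_of_pos (by positivity)]
    calc (k * deriv Φ (X τ))⁻¹ ≤ (k * deriv Φ (X τ))⁻¹ * (h' τ / (α * h τ)) :=
          le_mul_of_one_le_right (by positivity) ((one_le_div hpos).2 hle)
      _ = _ := by simp only [X]; field_simp

end IsAdmissibleDGF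

theorem stmt_11_general (Φ : ℝ → ℝ) (B C D : ℝ) (hΦ : IsAdmissibleDGF Φ B C D)
    (k₃ : ℝ) (hk₃ : 0 < k₃)
    (Ψ : ℝ → ℝ) (hΨ : Ψ = Function.invFun (fun x => k₃⁻¹ * Φ (k₃^2 * x)))
    (a b α : ℝ) (hab : a < b) (h : ℝ → ℝ)
    (hdiff : ∀ τ ∈ Set.Ioo a b, DifferentiableAt ℝ h τ)
    (hineq : ∀ τ ∈ Set.Ioo a b, α * h τ ≤ deriv h τ ∧ 0 < α * h τ)
    (ha hb : ℝ)
    (hlima : Tendsto h (nhdsWithin a (Set.Ioi a)) (nhds ha))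
    (hlimb : Tendsto h (nhdsWithin b (Set.Iio b)) (nhds hb)) :
    (∫ τ in Set.Ioo a b, deriv Ψ (h τ)) ≤
      (1/(k₃ * α)) * ∫ x in (Function.invFun Φ (k₃ * ha))..(Function.invFun Φ (k₃ * hb)),
        1 / Φ x := by
  have hmono : StrictMonoOn h (Ioo a b) :=
    strictMonoOn_of_deriv_pos (convex_Ioo a b)
      (fun τ hτ => (hdiff τ hτ).continuousAt.continuousWithinAt)
      (by rw [interior_Ioo]; exact fun τ hτ => (hineq τ hτ).2.trans_le (hineq τ hτ).1)
  have hmaps := hmono.monotoneOn.mapsTo_Icc_of_tendsto hlima hlimb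
  have hαa : 0 ≤ α * ha := ge_of_tendsto (hlima.const_mul α) <| by
    filter_upwards [Ioo_mem_nhdsGT hab] with τ hτ using (hineq τ hτ).2.le
  have hαb : 0 ≤ α * hb := ge_of_tendsto (hlimb.const_mul α) <| by
    filter_upwards [Ioo_mem_nhdsLT hab] with τ hτ using (hineq τ hτ).2.le
  have hΨ' : ∀ τ ∈ Ioo a b, deriv Ψ (h τ) = (k₃ * deriv Φ (Function.invFun Φ (k₃ * h τ)))⁻¹ := by
    intro τ hτ
    subst hΨ
    exact (hΦ.hasDerivAt_invFun_rescale hk₃.ne' (right_ne_zero_of_mul (hineq τ hτ).2.ne')).deriv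
  obtain ⟨τ₀, hτ₀⟩ := exists_between hab
  rw [setIntegral_congr_fun measurableSet_Ioo hΨ']
  exact hΦ.setIntegral_inv_mul_deriv_invFun_le measurableSet_Ioo hk₃
    (fun τ hτ => (hdiff τ hτ).hasDerivAt) hmono.injOn hmaps ((hmaps hτ₀).1.trans (hmaps hτ₀).2)
    hineq hαa hαb

theorem stmt_11 (Φ : ℝ → ℝ) (B C D : ℝ) (hΦ : IsAdmissibleDGF Φ B C D)
    (k₃ : ℝ) (hk₃ : 0 < k₃)
    (Ψ : ℝ → ℝ) (hΨ : Ψ = Function.invFun (fun x => k₃⁻¹ * Φ (k₃^2 * x)))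
    (a b α : ℝ) (hab : a < b) (h : ℝ → ℝ)
    (hdiff : ∀ τ ∈ Set.Ioo a b, DifferentiableAt ℝ h τ)
    (hcont : ContinuousOn (deriv h) (Set.Ioo a b))
    (hineq : ∀ τ ∈ Set.Ioo a b, α * h τ ≤ deriv h τ ∧ 0 < α * h τ)
    (ha hb : ℝ)
    (hlima : Tendsto h (nhdsWithin a (Set.Ioi a)) (nhds ha))
    (hlimb : Tendsto h (nhdsWithin b (Set.Iio b)) (nhds hb)) :
    (∫ τ in Set.Ioo a b, deriv Ψ (h τ)) ≤
      (1/(k₃ * α)) * ∫ x in (Function.invFun Φ (k₃ * ha))..(Function.invFun Φ (k₃ * hb)),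
        1 / Φ x :=
  stmt_11_general Φ B C D hΦ k₃ hk₃ Ψ hΨ a b α hab h hdiff hineq ha hb hlima hlimb
end

section
/- Let λ₂ < λ₁ < 0 and b > 0, g(τ) = b(e^{λ₁τ} − e^{λ₂τ}), and let τ_inf be such that g''(τ_inf) = 0. Then for all τ > τ_inf, g(τ) > 0 and g'(τ) ≤ (λ₁λ₂/(λ₁ + λ₂)) g(τ) < 0. -/
open Real

lemma aux_hd (a c : ℝ) (τ : ℝ) :
    HasDerivAt (fun t => a * Real.exp (c * t)) (a * c * Real.exp (c * τ)) τ := by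
  have h := ((Real.hasDerivAt_exp (c * τ)).comp τ ((hasDerivAt_id τ).const_mul c)).const_mul a
  simpa [mul_comm, mul_assoc, mul_left_comm] using h

theorem stmt_17 (lam₁ lam₂ b : ℝ) (h₂₁ : lam₂ < lam₁) (h₁ : lam₁ < 0) (hb : 0 < b)
    (g : ℝ → ℝ) (hg : g = fun τ => b * (Real.exp (lam₁ * τ) - Real.exp (lam₂ * τ)))
    (τinf : ℝ) (hτinf : deriv (deriv g) τinf = 0) :
    ∀ τ > τinf, 0 < g τ ∧ deriv g τ ≤ (lam₁ * lam₂ / (lam₁ + lam₂)) * g τ ∧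
      (lam₁ * lam₂ / (lam₁ + lam₂)) * g τ < 0 := by
  have hg' : g = fun τ => b * Real.exp (lam₁ * τ) - b * Real.exp (lam₂ * τ) := by
    rw [hg]; funext τ; ring
  have hd1 : deriv g = fun τ => b * lam₁ * Real.exp (lam₁ * τ) - b * lam₂ * Real.exp (lam₂ * τ) := by
    funext τ
    rw [hg']
    exact ((aux_hd b lam₁ τ).sub (aux_hd b lam₂ τ)).deriv
  have hd2 : deriv (deriv g) = fun τ =>
      b * lam₁ * lam₁ * Real.exp (lam₁ * τ) - b * lam₂ * lam₂ * Real.exp (lam₂ * τ) := by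
    funext τ
    rw [hd1]
    exact ((aux_hd (b * lam₁) lam₁ τ).sub (aux_hd (b * lam₂) lam₂ τ)).deriv
  rw [hd2] at hτinf
  have key : lam₁ ^ 2 * Real.exp (lam₁ * τinf) = lam₂ ^ 2 * Real.exp (lam₂ * τinf) := by
    have := sub_eq_zero.mp hτinf
    have hb' := hb.ne'
    nlinarith [this]
  have hsq : lam₁ ^ 2 < lam₂ ^ 2 := by nlinarith
  have hsq1 : 0 < lam₁ ^ 2 := by nlinarith
  have hτinf0 : 0 < τinf := by
    have he : Real.exp (lam₂ * τinf) < Real.exp (lam₁ * τinf) := by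
      nlinarith [Real.exp_pos (lam₁ * τinf), Real.exp_pos (lam₂ * τinf)]
    have := Real.exp_lt_exp.mp he
    nlinarith
  intro τ hτ
  have e1 : Real.exp (lam₁ * τ) = Real.exp (lam₁ * τinf) * Real.exp (lam₁ * (τ - τinf)) := by
    rw [← Real.exp_add]; ring_nf
  have e2 : Real.exp (lam₂ * τ) = Real.exp (lam₂ * τinf) * Real.exp (lam₂ * (τ - τinf)) := by
    rw [← Real.exp_add]; ring_nf
  have h3 : Real.exp (lam₂ * (τ - τinf)) < Real.exp (lam₁ * (τ - τinf)) :=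
    Real.exp_lt_exp.mpr (by nlinarith)
  have hgpp : 0 < b * lam₁ * lam₁ * Real.exp (lam₁ * τ) - b * lam₂ * lam₂ * Real.exp (lam₂ * τ) := by
    rw [e1, e2]
    have hp2 := Real.exp_pos (lam₂ * τinf)
    have hl2 : (0:ℝ) < lam₂ ^ 2 := by nlinarith
    have hA : 0 < b * (lam₂ ^ 2 * Real.exp (lam₂ * τinf)) := mul_pos hb (mul_pos hl2 hp2)
    have h5 : b * lam₁ * lam₁ * (Real.exp (lam₁ * τinf) * Real.exp (lam₁ * (τ - τinf)))
        = b * (lam₂ ^ 2 * Real.exp (lam₂ * τinf)) * Real.exp (lam₁ * (τ - τinf)) := by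
      rw [← key]; ring
    have h6 : b * lam₂ * lam₂ * (Real.exp (lam₂ * τinf) * Real.exp (lam₂ * (τ - τinf)))
        = b * (lam₂ ^ 2 * Real.exp (lam₂ * τinf)) * Real.exp (lam₂ * (τ - τinf)) := by ring
    rw [h5, h6]
    nlinarith [mul_pos hA (sub_pos.mpr h3)]
  have hgpos : 0 < g τ := by
    rw [hg]
    have : Real.exp (lam₂ * τ) < Real.exp (lam₁ * τ) :=
      Real.exp_lt_exp.mpr (by nlinarith)
    have := sub_pos.mpr this
    positivity
  have hsum : lam₁ + lam₂ < 0 := by linarith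
  have hsum' : lam₁ + lam₂ ≠ 0 := ne_of_lt hsum
  refine ⟨hgpos, ?_, ?_⟩
  · rw [hd1, div_mul_eq_mul_div, le_div_iff_of_neg hsum, hg]
    show lam₁ * lam₂ * (b * (Real.exp (lam₁ * τ) - Real.exp (lam₂ * τ))) ≤
      (b * lam₁ * Real.exp (lam₁ * τ) - b * lam₂ * Real.exp (lam₂ * τ)) * (lam₁ + lam₂)
    nlinarith [hgpp]
  · have hprod : 0 < lam₁ * lam₂ := mul_pos_of_neg_of_neg h₁ (by linarith)
    have : lam₁ * lam₂ / (lam₁ + lam₂) < 0 := div_neg_of_pos_of_neg hprod hsum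
    exact mul_neg_of_neg_of_pos this hgpos
end
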